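/- Let f : ℝ^{n₀} → ℝ^d be computed by a ReLU neural network with L hidden layers having n₁, …, n_L nodes respectively (i.e., f = A_{L+1} ∘ σ ∘ A_L ∘ ⋯ ∘ σ ∘ A₁ with affine maps A_i and componentwise ReLU σ). Then ℝ^{n₀} can be partitioned into at most Π_{i=1}^{L} (Σ_{j=0}^{n₀} C(n_i, j)) convex polyhedral pieces on each of which f is affine. -/

import Mathlib

/-!
On a sign cell of the first layer, the set where each preactivation has a prescribed sign, the
ReLU acts as a fixed coordinate mask, so there the network agrees with a network that has one
hidden layer fewer. The cells are convex, and at most `∑_{j ≤ n₀} C(m, j)` of them are nonempty: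
`m` hyperplanes cut an `n`-dimensional affine space into at most that many cells, because adding a
hyperplane splits only the cells it meets, and these are cells of the arrangement induced on the
hyperplane itself, which has dimension `n - 1`. Refining every cell by the pieces of the shallower
network and inducting on the depth gives the product bound.
-/

/-- `NetComputes ws n₀ d f` means `f` is computed by a ReLU network with input
dimension `n₀`, hidden layer widths `ws`, and output dimension `d`. -/
def NetComputes : List ℕ → (n₀ d : ℕ) → ((Fin n₀ → ℝ) → (Fin d → ℝ)) → Prop
  | [], n₀, d, f => ∃ A : (Fin n₀ → ℝ) →ᵃ[ℝ] (Fin d → ℝ), f = A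
  | m :: ws, n₀, d, f =>
      ∃ (A : (Fin n₀ → ℝ) →ᵃ[ℝ] (Fin m → ℝ)) (g : (Fin m → ℝ) → (Fin d → ℝ)),
        NetComputes ws m d g ∧ f = fun x => g (fun i => max (A x i) 0)

open Finset (range)
open Module (finrank)
open Function

section SignCells

variable {E : Type*} [AddCommGroup E] [Module ℝ E]

def signRegion (φ : E →ᵃ[ℝ] ℝ) : Bool → Set E
  | true => {x | 0 ≤ φ x}
  | false => {x | φ x < 0}

def signCell {m : ℕ} (fs : Fin m → E →ᵃ[ℝ] ℝ) (s : Fin m → Bool) : Set E :=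
  ⋂ i, signRegion (fs i) (s i)

def signPatterns {m : ℕ} (fs : Fin m → E →ᵃ[ℝ] ℝ) (K : Set E) : Set (Fin m → Bool) :=
  {s | (signCell fs s ∩ K).Nonempty}

lemma convex_signRegion (φ : E →ᵃ[ℝ] ℝ) : ∀ b, Convex ℝ (signRegion φ b)
  | true => (convex_Ici 0).affine_preimage φ
  | false => (convex_Iio 0).affine_preimage φ

lemma mem_signRegion_decide (φ : E →ᵃ[ℝ] ℝ) (x : E) : x ∈ signRegion φ (decide (0 ≤ φ x)) := by
  by_cases h : 0 ≤ φ x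
  · simp only [h, decide_true]
    exact h
  · simp only [h, decide_false]
    exact not_le.1 h

lemma eq_of_mem_signRegion {φ : E →ᵃ[ℝ] ℝ} {x : E} :
    ∀ {b b' : Bool}, x ∈ signRegion φ b → x ∈ signRegion φ b' → b = b'
  | true, true, _, _ | false, false, _, _ => rfl
  | true, false, h, h' | false, true, h', h =>
    absurd (show 0 ≤ φ x from h) (not_le.2 (show φ x < 0 from h'))

lemma max_zero_eq_of_mem_signRegion {φ : E →ᵃ[ℝ] ℝ} {x : E} :
    ∀ {b : Bool}, x ∈ signRegion φ b → max (φ x) 0 = if b then φ x else 0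
  | true, h => max_eq_left h
  | false, h => max_eq_right (le_of_lt h)

variable {m : ℕ}

lemma convex_signCell (fs : Fin m → E →ᵃ[ℝ] ℝ) (s : Fin m → Bool) : Convex ℝ (signCell fs s) :=
  convex_iInter fun i => convex_signRegion (fs i) (s i)

lemma mem_signCell_decide (fs : Fin m → E →ᵃ[ℝ] ℝ) (x : E) :
    x ∈ signCell fs (fun i => decide (0 ≤ fs i x)) :=
  Set.mem_iInter.2 fun i => mem_signRegion_decide (fs i) x

lemma pairwise_disjoint_signCell (fs : Fin m → E →ᵃ[ℝ] ℝ) : Pairwise (Disjoint on signCell fs) :=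
  fun _ _ hne => Set.disjoint_left.2 fun _ hx hx' => hne <| funext fun i =>
    eq_of_mem_signRegion (Set.mem_iInter.1 hx i) (Set.mem_iInter.1 hx' i)

lemma signCell_succ (fs : Fin (m + 1) → E →ᵃ[ℝ] ℝ) (s : Fin (m + 1) → Bool) :
    signCell fs s = signCell (Fin.init fs) (Fin.init s) ∩
      signRegion (fs (Fin.last m)) (s (Fin.last m)) := by
  ext x
  simp only [signCell, Set.mem_inter_iff, Set.mem_iInter, Fin.forall_fin_succ', Fin.init]

lemma signPatterns_mono (fs : Fin m → E →ᵃ[ℝ] ℝ) {K K' : Set E} (h : K ⊆ K') :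
    signPatterns fs K ⊆ signPatterns fs K' :=
  fun _ hs => hs.mono (Set.inter_subset_inter_right _ h)

lemma ncard_signPatterns_succ_le (fs : Fin (m + 1) → E →ᵃ[ℝ] ℝ) (K : Set E) :
    (signPatterns fs K).ncard ≤
      (signPatterns (Fin.init fs) (K ∩ signRegion (fs (Fin.last m)) true)).ncard +
      (signPatterns (Fin.init fs) (K ∩ signRegion (fs (Fin.last m)) false)).ncard := by
  set T : Bool → Set (Fin m → Bool) :=
    fun b => signPatterns (Fin.init fs) (K ∩ signRegion (fs (Fin.last m)) b)
  have hsub : signPatterns fs K ⊆ (Fin.snoc · true) '' T true ∪ (Fin.snoc · false) '' T false := by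
    rintro s ⟨x, hxs, hxK⟩
    obtain ⟨t, b, rfl⟩ : ∃ t b, s = Fin.snoc t b := ⟨_, _, (Fin.snoc_init_self s).symm⟩
    rw [signCell_succ, Fin.init_snoc, Fin.snoc_last] at hxs
    have ht : t ∈ T b := ⟨x, hxs.1, hxK, hxs.2⟩
    cases b
    · exact Or.inr ⟨t, ht, rfl⟩
    · exact Or.inl ⟨t, ht, rfl⟩
  calc (signPatterns fs K).ncard ≤ _ := Set.ncard_le_ncard hsub (Set.toFinite _)
    _ ≤ _ := Set.ncard_union_le _ _
    _ ≤ _ := add_le_add (Set.ncard_image_le (Set.toFinite _)) (Set.ncard_image_le (Set.toFinite _))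

lemma AffineMap.exists_mem_segment_apply_eq_zero (φ : E →ᵃ[ℝ] ℝ) {x y : E} (hx : 0 ≤ φ x)
    (hy : φ y < 0) : ∃ z ∈ segment ℝ x y, φ z = 0 := by
  have hd : 0 < φ x - φ y := by linarith
  refine ⟨AffineMap.lineMap x y (φ x / (φ x - φ y)), ?_, ?_⟩
  · rw [segment_eq_image_lineMap]
    exact ⟨_, ⟨div_nonneg hx hd.le, (div_le_one hd).2 (by linarith)⟩, rfl⟩
  · rw [φ.apply_lineMap, AffineMap.lineMap_apply_module]
    field_simp
    ring

lemma inter_signPatterns_subset (fs : Fin m → E →ᵃ[ℝ] ℝ) (φ : E →ᵃ[ℝ] ℝ) {K : Set E}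
    (hK : Convex ℝ K) :
    signPatterns fs (K ∩ signRegion φ true) ∩ signPatterns fs (K ∩ signRegion φ false) ⊆
      signPatterns fs (K ∩ {x | φ x = 0}) := by
  rintro s ⟨⟨x, hxs, hxK, hx⟩, ⟨y, hys, hyK, hy⟩⟩
  obtain ⟨z, hz, hz0⟩ := φ.exists_mem_segment_apply_eq_zero hx hy
  exact ⟨z, (convex_signCell fs s).segment_subset hxs hys hz, hK.segment_subset hxK hyK hz, hz0⟩

lemma finrank_direction_affineSpan_inter_lt [FiniteDimensional ℝ E] {S : AffineSubspace ℝ E}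
    {φ : E →ᵃ[ℝ] ℝ} {x y : E} (hx : x ∈ S) (hy : y ∈ S) (hxy : φ x ≠ φ y) :
    finrank ℝ (affineSpan ℝ (S ∩ {z | φ z = 0})).direction < finrank ℝ S.direction := by
  have hle : (affineSpan ℝ (S ∩ {z | φ z = 0})).direction ≤
      S.direction ⊓ LinearMap.ker φ.linear := by
    rw [direction_affineSpan, vectorSpan_def, Submodule.span_le]
    rintro _ ⟨a, ⟨haS, ha⟩, b, ⟨hbS, hb⟩, rfl⟩
    refine ⟨AffineSubspace.vsub_mem_direction haS hbS, ?_⟩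
    rw [SetLike.mem_coe, LinearMap.mem_ker, AffineMap.linearMap_vsub, ha, hb, vsub_self]
  have hlt : S.direction ⊓ LinearMap.ker φ.linear < S.direction := by
    refine inf_le_left.lt_of_ne fun h => hxy ?_
    have hmem : x -ᵥ y ∈ S.direction ⊓ LinearMap.ker φ.linear := by
      rw [h]
      exact AffineSubspace.vsub_mem_direction hx hy
    have hker := (Submodule.mem_inf.1 hmem).2
    rwa [LinearMap.mem_ker, AffineMap.linearMap_vsub, vsub_eq_sub, sub_eq_zero] at hker
  exact (Submodule.finrank_mono hle).trans_lt (Submodule.finrank_lt_finrank_of_lt hlt)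

end SignCells

lemma Nat.sum_range_succ_choose_succ (m n : ℕ) :
    ∑ j ∈ range (n + 1), (m + 1).choose j =
      ∑ j ∈ range (n + 1), m.choose j + ∑ j ∈ range n, m.choose j := by
  rw [Finset.sum_range_succ', Finset.sum_range_succ' (fun j => m.choose j)]
  simp only [Nat.choose_succ_succ, Finset.sum_add_distrib, Nat.choose_zero_right]
  ring

section Count

variable {E : Type*} [AddCommGroup E] [Module ℝ E] [FiniteDimensional ℝ E]

theorem ncard_signPatterns_le {m : ℕ} (fs : Fin m → E →ᵃ[ℝ] ℝ) (S : AffineSubspace ℝ E) {n : ℕ}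
    (hS : finrank ℝ S.direction ≤ n) :
    (signPatterns fs S).ncard ≤ ∑ j ∈ range (n + 1), m.choose j := by
  induction m generalizing n S with
  | zero =>
    calc (signPatterns fs S).ncard ≤ Nat.card (Fin 0 → Bool) := Set.ncard_le_card _
      _ = _ := by simp [Finset.sum_range_succ']
  | succ m ih =>
    set φ := fs (Fin.last m)
    set Tpos := signPatterns (Fin.init fs) (S ∩ signRegion φ true)
    set Tneg := signPatterns (Fin.init fs) (S ∩ signRegion φ false)
    have hunion : (Tpos ∪ Tneg).ncard ≤ ∑ j ∈ range (n + 1), m.choose j :=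
      (Set.ncard_le_ncard (Set.union_subset (signPatterns_mono _ Set.inter_subset_left)
        (signPatterns_mono _ Set.inter_subset_left))).trans (ih _ S hS)
    have hinter : (Tpos ∩ Tneg).ncard ≤ ∑ j ∈ range n, m.choose j := by
      rcases (Tpos ∩ Tneg).eq_empty_or_nonempty with h | ⟨_, ⟨x, -, hxS, hx⟩, ⟨y, -, hyS, hy⟩⟩
      · simp [h]
      have hlt := finrank_direction_affineSpan_inter_lt hxS hyS
        (lt_of_lt_of_le (show φ y < 0 from hy) (show 0 ≤ φ x from hx)).ne'
      obtain ⟨n, rfl⟩ : ∃ n', n = n' + 1 := ⟨n - 1, by omega⟩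
      exact (Set.ncard_le_ncard ((inter_signPatterns_subset _ φ S.convex).trans
        (signPatterns_mono _ (subset_affineSpan ℝ _)))).trans (ih _ _ (by omega))
    calc (signPatterns fs S).ncard ≤ Tpos.ncard + Tneg.ncard := ncard_signPatterns_succ_le fs S
      _ = (Tpos ∪ Tneg).ncard + (Tpos ∩ Tneg).ncard :=
        (Set.ncard_union_add_ncard_inter _ _ (Set.toFinite _) (Set.toFinite _)).symm
      _ ≤ _ := add_le_add hunion hinter
      _ = _ := (Nat.sum_range_succ_choose_succ m n).symm

theorem ncard_signPatterns_univ_le {m : ℕ} (fs : Fin m → E →ᵃ[ℝ] ℝ) :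
    (signPatterns fs Set.univ).ncard ≤ ∑ j ∈ range (finrank ℝ E + 1), m.choose j := by
  simpa using ncard_signPatterns_le fs ⊤
    (by rw [AffineSubspace.direction_top, finrank_top])

end Count

section Partition

variable {E F : Type*} [AddCommGroup E] [Module ℝ E] [AddCommGroup F] [Module ℝ F]

structure IsConvexAffinePartition (f : E → F) (Ps : Finset (Set E)) : Prop where
  iUnion_eq : ⋃ P ∈ Ps, P = Set.univ
  pairwise_disjoint : (Ps : Set (Set E)).Pairwise Disjoint
  convex : ∀ P ∈ Ps, Convex ℝ P
  exists_eqOn : ∀ P ∈ Ps, ∃ A : E →ᵃ[ℝ] F, Set.EqOn f A P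

lemma AffineMap.isConvexAffinePartition_singleton_univ (A : E →ᵃ[ℝ] F) :
    IsConvexAffinePartition A {Set.univ} where
  iUnion_eq := by simp
  pairwise_disjoint := by simp
  convex := by simp [convex_univ]
  exists_eqOn := by simp

lemma exists_isConvexAffinePartition_of_cover {ι : Type*} (I : Finset ι) (C : ι → Set E)
    (hcover : ∀ x, ∃ i ∈ I, x ∈ C i) (hdisj : (I : Set ι).PairwiseDisjoint C)
    (hconv : ∀ i ∈ I, Convex ℝ (C i)) {f : E → F} (g : ι → E → F)
    (hfg : ∀ i ∈ I, Set.EqOn f (g i) (C i)) (Q : ι → Finset (Set E))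
    (hQ : ∀ i ∈ I, IsConvexAffinePartition (g i) (Q i)) :
    ∃ Ps : Finset (Set E), Ps.card ≤ ∑ i ∈ I, (Q i).card ∧ IsConvexAffinePartition f Ps := by
  classical
  have mem_pieces {P : Set E} :
      P ∈ I.biUnion (fun i => (Q i).image (C i ∩ ·)) ↔ ∃ i ∈ I, ∃ R ∈ Q i, C i ∩ R = P := by
    simp only [Finset.mem_biUnion, Finset.mem_image]
  refine ⟨I.biUnion fun i => (Q i).image (C i ∩ ·), Finset.card_biUnion_le.trans
    (Finset.sum_le_sum fun i _ => Finset.card_image_le), ⟨?_, ?_, ?_, ?_⟩⟩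
  · refine Set.eq_univ_of_forall fun x => ?_
    obtain ⟨i, hi, hxi⟩ := hcover x
    obtain ⟨R, hR, hxR⟩ := Set.mem_iUnion₂.1 ((hQ i hi).iUnion_eq ▸ Set.mem_univ x)
    exact Set.mem_iUnion₂.2 ⟨_, mem_pieces.2 ⟨i, hi, R, hR, rfl⟩, hxi, hxR⟩
  · rintro _ hP _ hP' hne
    obtain ⟨i, hi, R, hR, rfl⟩ := mem_pieces.1 hP
    obtain ⟨j, hj, R', hR', rfl⟩ := mem_pieces.1 hP'
    by_cases hij : i = j
    · subst hij
      have hRR' : R ≠ R' := by rintro rfl; exact hne rfl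
      exact ((hQ i hi).pairwise_disjoint hR hR' hRR').mono Set.inter_subset_right
        Set.inter_subset_right
    · exact (hdisj hi hj hij).mono Set.inter_subset_left Set.inter_subset_left
  · intro P hP
    obtain ⟨i, hi, R, hR, rfl⟩ := mem_pieces.1 hP
    exact (hconv i hi).inter ((hQ i hi).convex R hR)
  · intro P hP
    obtain ⟨i, hi, R, hR, rfl⟩ := mem_pieces.1 hP
    obtain ⟨A, hA⟩ := (hQ i hi).exists_eqOn R hR
    exact ⟨A, fun x hx => (hfg i hi hx.1).trans (hA hx.2)⟩

end Partition

section Network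

variable {E : Type*} [AddCommGroup E] [Module ℝ E] {m : ℕ}

def reluMask (A : E →ᵃ[ℝ] (Fin m → ℝ)) (s : Fin m → Bool) : E →ᵃ[ℝ] (Fin m → ℝ) :=
  AffineMap.pi fun i => if s i then (AffineMap.proj i).comp A else 0

lemma relu_eq_reluMask {A : E →ᵃ[ℝ] (Fin m → ℝ)} {s : Fin m → Bool} {x : E}
    (hx : x ∈ signCell (fun i => (AffineMap.proj i).comp A) s) :
    (fun i => max (A x i) 0) = reluMask A s x := by
  funext i
  refine (max_zero_eq_of_mem_signRegion (Set.mem_iInter.1 hx i)).trans ?_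
  by_cases hs : s i <;> simp [reluMask, hs]

end Network

lemma NetComputes.comp_affineMap {ws : List ℕ} {n₀ m d : ℕ} {g : (Fin m → ℝ) → (Fin d → ℝ)}
    (hg : NetComputes ws m d g) (B : (Fin n₀ → ℝ) →ᵃ[ℝ] (Fin m → ℝ)) :
    NetComputes ws n₀ d (fun x => g (B x)) := by
  cases ws with
  | nil =>
    obtain ⟨A, rfl⟩ := hg
    exact ⟨A.comp B, rfl⟩
  | cons k ws =>
    obtain ⟨A, g', hg', rfl⟩ := hg
    exact ⟨A.comp B, g', hg', rfl⟩

theorem NetComputes.exists_isConvexAffinePartition {widths : List ℕ} {n₀ d : ℕ}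
    {f : (Fin n₀ → ℝ) → (Fin d → ℝ)} (hf : NetComputes widths n₀ d f) :
    ∃ Ps : Finset (Set (Fin n₀ → ℝ)),
      Ps.card ≤ (widths.map fun m => ∑ j ∈ range (n₀ + 1), m.choose j).prod ∧
      IsConvexAffinePartition f Ps := by
  induction widths generalizing f with
  | nil =>
    obtain ⟨A, rfl⟩ := hf
    exact ⟨{Set.univ}, by simp, A.isConvexAffinePartition_singleton_univ⟩
  | cons m ws ih =>
    obtain ⟨A, g, hg, rfl⟩ := hf
    set fs : Fin m → (Fin n₀ → ℝ) →ᵃ[ℝ] ℝ := fun i => (AffineMap.proj i).comp A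
    choose Q hQcard hQ using fun s => ih (hg.comp_affineMap (reluMask A s))
    have hfin := (signPatterns fs Set.univ).toFinite
    obtain ⟨Ps, hcard, hPs⟩ := exists_isConvexAffinePartition_of_cover hfin.toFinset
      (signCell fs)
      (fun x => ⟨_, hfin.mem_toFinset.2 ⟨x, mem_signCell_decide fs x, trivial⟩,
        mem_signCell_decide fs x⟩)
      ((pairwise_disjoint_signCell fs).set_pairwise _) (fun s _ => convex_signCell fs s) _
      (fun s _ x hx => congrArg g (relu_eq_reluMask hx)) Q (fun s _ => hQ s)
    have hcells : hfin.toFinset.card ≤ ∑ j ∈ range (n₀ + 1), m.choose j := by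
      simpa [← Set.ncard_eq_toFinset_card] using ncard_signPatterns_univ_le fs
    refine ⟨Ps, ?_, hPs⟩
    calc Ps.card ≤ ∑ s ∈ hfin.toFinset, (Q s).card := hcard
      _ ≤ hfin.toFinset.card * (ws.map fun m => ∑ j ∈ range (n₀ + 1), m.choose j).prod :=
        Finset.sum_le_card_nsmul _ _ _ fun s _ => hQcard s
      _ ≤ _ := by
        rw [List.map_cons, List.prod_cons]
        exact Nat.mul_le_mul_right _ hcells

theorem relu_net_affine_pieces (n₀ d : ℕ) (widths : List ℕ)
    (f : (Fin n₀ → ℝ) → (Fin d → ℝ)) (hf : NetComputes widths n₀ d f) :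
    ∃ Ps : Finset (Set (Fin n₀ → ℝ)),
      Ps.card ≤ (widths.map (fun m => ∑ j ∈ Finset.range (n₀ + 1), m.choose j)).prod ∧
      (⋃ P ∈ Ps, P) = Set.univ ∧
      (Ps : Set (Set (Fin n₀ → ℝ))).Pairwise Disjoint ∧
      (∀ P ∈ Ps, Convex ℝ P) ∧
      (∀ P ∈ Ps, ∃ A : (Fin n₀ → ℝ) →ᵃ[ℝ] (Fin d → ℝ), Set.EqOn f A P) := by
  obtain ⟨Ps, hcard, hPs⟩ := hf.exists_isConvexAffinePartition
  exact ⟨Ps, hcard, hPs.iUnion_eq, hPs.pairwise_disjoint, hPs.convex, hPs.exists_eqOn⟩
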